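/- Let X, Y ⊆ ω, let A be a pca, and let γ : ω ⇀ A be a Y-effectively pca-valued partial numbering. Given an embedding f : K1^X ↪ A of pcas and any two elements a⊥, a⊤ in the range of f, there exists a Y-computable (a⊥, a⊤)-decider for X with respect to γ. -/

import Mathlib

namespace PCAEmb

/-! ### Oracle computability -/

/-- Codes for partial functions computable relative to an oracle. -/
inductive OCode : Type
  | zero : OCode
  | succ : OCode
  | left : OCode
  | right : OCode
  | oracle : OCode
  | pair : OCode → OCode → OCode
  | comp : OCode → OCode → OCode
  | prec : OCode → OCode → OCode
  | rfind' : OCode → OCode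

/-- Evaluation of an oracle code, relative to a (partial) oracle `O`. -/
def evalo (O : ℕ →. ℕ) : OCode → ℕ →. ℕ
  | .zero => pure 0
  | .succ => Nat.succ
  | .left => ↑fun n : ℕ => n.unpair.1
  | .right => ↑fun n : ℕ => n.unpair.2
  | .oracle => O
  | .pair cf cg => fun n => Nat.pair <$> evalo O cf n <*> evalo O cg n
  | .comp cf cg => fun n => evalo O cg n >>= evalo O cf
  | .prec cf cg =>
      Nat.unpaired fun a n =>
        n.rec (evalo O cf a) fun y IH => do
          let i ← IH
          evalo O cg (Nat.pair a (Nat.pair y i))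
  | .rfind' cf =>
      Nat.unpaired fun a m =>
        (Nat.rfind fun n => (fun x => x = 0) <$> evalo O cf (Nat.pair a (n + m))).map (· + m)

/-- The standard numbering of oracle codes. -/
def OCode.ofNat : ℕ → OCode
  | 0 => .zero
  | 1 => .succ
  | 2 => .left
  | 3 => .right
  | 4 => .oracle
  | n + 5 =>
    match n % 4 with
    | 0 => .pair (OCode.ofNat (n / 4).unpair.1) (OCode.ofNat (n / 4).unpair.2)
    | 1 => .comp (OCode.ofNat (n / 4).unpair.1) (OCode.ofNat (n / 4).unpair.2)
    | 2 => .prec (OCode.ofNat (n / 4).unpair.1) (OCode.ofNat (n / 4).unpair.2)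
    | _ => .rfind' (OCode.ofNat (n / 4).unpair.1)
  decreasing_by
    all_goals
      have h1 := Nat.unpair_left_le (n / 4)
      have h2 := Nat.unpair_right_le (n / 4)
      have h3 := Nat.div_le_self n 4
      omega

/-- The `e`-th Turing functional with oracle `O` : `Φ_e^O`. -/
def phi (O : ℕ →. ℕ) (e : ℕ) : ℕ →. ℕ := evalo O (OCode.ofNat e)

/-- The characteristic function of a set of naturals, as a (total) partial function. -/
noncomputable def chi (X : Set ℕ) : ℕ →. ℕ :=
  fun n => Part.some (X.indicator (fun _ => 1) n)

/-- `ψ` is partial computable relative to the oracle `O`. -/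
def RecursiveIn (O : ℕ →. ℕ) (ψ : ℕ →. ℕ) : Prop := ∃ c : OCode, evalo O c = ψ

/-- Turing reducibility of sets of naturals. -/
def TuringLE (X Y : Set ℕ) : Prop := RecursiveIn (chi Y) (chi X)

/-- A total function `d : ℕ → ℕ` is `Y`-computable. -/
def ComputableIn (Y : Set ℕ) (d : ℕ → ℕ) : Prop :=
  RecursiveIn (chi Y) (fun n => Part.some (d n))

/-- A binary relation on `ℕ` is `Y`-c.e. -/
def CEIn (Y : Set ℕ) (R : ℕ → ℕ → Prop) : Prop :=
  ∃ c : OCode, ∀ n m, R n m ↔ (evalo (chi Y) c (Nat.pair n m)).Dom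

/-- A set `W ⊆ ℕ` is `Y`-c.e. -/
def CE1In (Y : Set ℕ) (W : Set ℕ) : Prop :=
  ∃ c : OCode, ∀ n, n ∈ W ↔ (evalo (chi Y) c n).Dom

/-- The canonical finite set `D_u` with code `u` (binary coding). -/
def Du (u : ℕ) : Set ℕ := {k | u.testBit k}

/-- Enumeration reducibility: `Z ≤ₑ Y`. -/
def EnumLE (Z Y : Set ℕ) : Prop :=
  ∃ W : Set ℕ, CE1In ∅ W ∧ ∀ x, x ∈ Z ↔ ∃ u, Nat.pair x u ∈ W ∧ Du u ⊆ Y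

/-- The Turing jump `X'` of a set `X`. -/
def jump (X : Set ℕ) : Set ℕ := {e | (phi (chi X) e e).Dom}

/-- The halting set `K = {e : φ_e(e)↓}`. -/
def Khalt : Set ℕ := jump ∅

/-! ### Partial combinatory algebras -/

/-- `k·a·b` as a partial element. -/
def app2 {α : Type*} (app : α → α → Part α) (a b c : α) : Part α :=
  (app a b).bind fun x => app x c

/-- `s·a·b·c` as a partial element. -/
def app3 {α : Type*} (app : α → α → Part α) (a b c d : α) : Part α :=
  (app2 app a b c).bind fun x => app x d

/-- A partial applicative structure is a pca if it has (distinct) combinators `s` and `k`. -/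
def IsPCA {α : Type*} (app : α → α → Part α) : Prop :=
  ∃ s k : α, s ≠ k ∧
    (∀ a b : α, app2 app k a b = Part.some a) ∧
    (∀ a b : α, (app2 app s a b).Dom) ∧
    (∀ a b c : α,
      app3 app s a b c = (app a c).bind fun x => (app b c).bind fun y => app x y)

/-- An embedding of partial combinatory algebras: an injection that preserves
(defined) application. -/
def IsPCAEmbedding {α β : Type*} (appA : α → α → Part α) (appB : β → β → Part β)
    (f : α → β) : Prop :=
  Function.Injective f ∧ ∀ a a' c : α, c ∈ appA a a' → f c ∈ appB (f a) (f a')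

/-! ### Partial numberings -/

/-- `γ : ℕ ⇀ α` is a partial numbering (i.e. surjective). -/
def IsNumbering {α : Type*} (γ : ℕ →. α) : Prop := ∀ a : α, ∃ n, a ∈ γ n

/-- `d` is an `(a⊥, a⊤)`-decider for `X` with respect to `γ`. -/
def IsDecider {α : Type*} (γ : ℕ →. α) (abot atop : α) (X : Set ℕ) (d : ℕ → ℕ) : Prop :=
  ∀ n, (n ∉ X → γ (d n) = Part.some abot) ∧ (n ∈ X → γ (d n) = Part.some atop)

/-- `γ` has `Y`-c.e. inequivalence. -/
def CEInequiv {α : Type*} (Y : Set ℕ) (γ : ℕ →. α) : Prop :=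
  ∃ R : ℕ → ℕ → Prop, CEIn Y R ∧
    ∀ n m, (γ n).Dom → (γ m).Dom → (R n m ↔ γ n ≠ γ m)

/-- `γ` is a `Y`-effectively pca-valued partial numbering: the application is
represented on codes by a partial `Y`-computable function `ψ`. -/
def EffValued {α : Type*} (Y : Set ℕ) (app : α → α → Part α) (γ : ℕ →. α) : Prop :=
  ∃ ψ : ℕ →. ℕ, RecursiveIn (chi Y) ψ ∧
    ∀ (n m : ℕ) (a b c : α), a ∈ γ n → b ∈ γ m → c ∈ app a b →
      ∃ j, j ∈ ψ (Nat.pair n m) ∧ c ∈ γ j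

/-- `γ` is a strongly `Y`-effectively pca-valued partial numbering. -/
def StrongEffValued {α : Type*} (Y : Set ℕ) (app : α → α → Part α) (γ : ℕ →. α) : Prop :=
  ∃ ψ : ℕ →. ℕ, RecursiveIn (chi Y) ψ ∧
    (∀ (n m : ℕ) (a b c : α), a ∈ γ n → b ∈ γ m → c ∈ app a b →
      ∃ j, j ∈ ψ (Nat.pair n m) ∧ c ∈ γ j) ∧
    (∀ (n m k l : ℕ) (a b a' b' c : α), a ∈ γ n → b ∈ γ m → a' ∈ γ k → b' ∈ γ l →
      c ∈ app a b → c ∈ app a' b' → ψ (Nat.pair n m) = ψ (Nat.pair k l))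

/-! ### The models -/

/-- Kleene's first model relativized to `X`: application `n · m = Φ_n^X(m)`. -/
noncomputable def k1App (X : Set ℕ) : ℕ → ℕ → Part ℕ := fun n m => phi (chi X) n m

/-- A total function as a partial function. -/
def toPFun (g : ℕ → ℕ) : ℕ →. ℕ := fun n => Part.some (g n)

/-- Join `f ⊕ g` of two partial functions. -/
def pjoin (f g : ℕ →. ℕ) : ℕ →. ℕ := fun n =>
  if n % 2 = 0 then f (n / 2) else g (n / 2)

/-- The totalization of a partial function, as a partial element of `ℕ → ℕ`:
defined iff `ψ` is total. -/
def partToTotal (ψ : ℕ →. ℕ) : Part (ℕ → ℕ) :=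
  ⟨∀ n, (ψ n).Dom, fun H n => (ψ n).get (H n)⟩

/-- Application in Kleene's second model `K₂`: `g · h = Φ^{g⊕h}_{g 0}`,
defined iff this function is total. -/
def k2App (g h : ℕ → ℕ) : Part (ℕ → ℕ) :=
  partToTotal (phi (pjoin (toPFun g) (toPFun h)) (g 0))

/-- Application in van Oosten's sequential model `B`: `θ · ρ = Φ^{θ⊕ρ}_{θ 0}`
(always defined, as a partial function). -/
def bApp (θ ρ : ℕ →. ℕ) : Part (ℕ →. ℕ) :=
  Part.some (fun n => (θ 0).bind fun e => phi (pjoin θ ρ) e n)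

/-- Restriction of a partial applicative structure to a subset. -/
def subApp {α : Type*} (app : α → α → Part α) (P : α → Prop)
    (a b : Subtype P) : Part (Subtype P) :=
  (app a.1 b.1).bind fun c => Part.assert (P c) fun h => Part.some ⟨c, h⟩

/-- Carrier of `K₂^X` : the total `X`-computable functions. -/
def K2el (X : Set ℕ) : Type := {g : ℕ → ℕ // RecursiveIn (chi X) (toPFun g)}

/-- Application in `K₂^X`. -/
def k2XApp (X : Set ℕ) : K2el X → K2el X → Part (K2el X) :=
  subApp k2App _

/-- Carrier of `B^X` : the partial `X`-computable functions. -/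
def Bel (X : Set ℕ) : Type := {θ : ℕ →. ℕ // RecursiveIn (chi X) θ}

/-- Application in `B^X`. -/
def bXApp (X : Set ℕ) : Bel X → Bel X → Part (Bel X) :=
  subApp bApp _

/-- Application in Scott's graph model `G`. -/
def gApp (A B : Set ℕ) : Part (Set ℕ) :=
  Part.some {n | ∃ u, Nat.pair n u ∈ A ∧ Du u ⊆ B}

/-- Carrier of `G^Z` : the sets enumeration-reducible to `Z`. -/
def Gel (Z : Set ℕ) : Type := {A : Set ℕ // EnumLE A Z}

/-- Application in `G^Z`. -/
def gXApp (Z : Set ℕ) : Gel Z → Gel Z → Part (Gel Z) :=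
  subApp gApp _

/-- `X ⊕ X̄ = {2n : n ∈ X} ∪ {2n+1 : n ∉ X}`. -/
def joinCompl (X : Set ℕ) : Set ℕ :=
  {k | ∃ n, (k = 2 * n ∧ n ∈ X) ∨ (k = 2 * n + 1 ∧ n ∉ X)}

/-! ### The λ-calculus -/

/-- Untyped λ-terms (de Bruijn representation). -/
inductive Lam : Type
  | var : ℕ → Lam
  | app : Lam → Lam → Lam
  | abs : Lam → Lam

/-- Lift (shift up) the free variables `≥ d` of a term. -/
def Lam.lift : Lam → ℕ → Lam
  | .var n, d => if n < d then .var n else .var (n + 1)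
  | .app M N, d => .app (M.lift d) (N.lift d)
  | .abs M, d => .abs (M.lift (d + 1))

/-- Substitution `M[k := N]` (de Bruijn). -/
def Lam.subst : Lam → ℕ → Lam → Lam
  | .var n, k, N => if n = k then N else if k < n then .var (n - 1) else .var n
  | .app M M', k, N => .app (M.subst k N) (M'.subst k N)
  | .abs M, k, N => .abs (M.subst (k + 1) (N.lift 0))

/-- β-equivalence of λ-terms. -/
inductive BetaEq : Lam → Lam → Prop
  | beta (M N : Lam) : BetaEq (.app (.abs M) N) (M.subst 0 N)
  | refl (M : Lam) : BetaEq M M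
  | symm {M N : Lam} : BetaEq M N → BetaEq N M
  | trans {M N P : Lam} : BetaEq M N → BetaEq N P → BetaEq M P
  | appCongr {M M' N N' : Lam} :
      BetaEq M M' → BetaEq N N' → BetaEq (.app M N) (.app M' N')
  | absCongr {M M' : Lam} : BetaEq M M' → BetaEq (.abs M) (.abs M')

/-- βη-equivalence of λ-terms. -/
inductive BetaEtaEq : Lam → Lam → Prop
  | beta (M N : Lam) : BetaEtaEq (.app (.abs M) N) (M.subst 0 N)
  | eta (M : Lam) : BetaEtaEq (.abs (.app (M.lift 0) (.var 0))) M
  | refl (M : Lam) : BetaEtaEq M M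
  | symm {M N : Lam} : BetaEtaEq M N → BetaEtaEq N M
  | trans {M N P : Lam} : BetaEtaEq M N → BetaEtaEq N P → BetaEtaEq M P
  | appCongr {M M' N N' : Lam} :
      BetaEtaEq M M' → BetaEtaEq N N' → BetaEtaEq (.app M N) (.app M' N')
  | absCongr {M M' : Lam} : BetaEtaEq M M' → BetaEtaEq (.abs M) (.abs M')

def lamBetaSetoid : Setoid Lam := ⟨BetaEq, ⟨BetaEq.refl, BetaEq.symm, BetaEq.trans⟩⟩

def lamBetaEtaSetoid : Setoid Lam :=
  ⟨BetaEtaEq, ⟨BetaEtaEq.refl, BetaEtaEq.symm, BetaEtaEq.trans⟩⟩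

/-- The pca `λ` of λ-terms modulo β-equivalence. -/
def LamBeta : Type := Quotient lamBetaSetoid

/-- The pca `λη` of λ-terms modulo βη-equivalence. -/
def LamBetaEta : Type := Quotient lamBetaEtaSetoid

/-- Application in `λ` (total). -/
def lamBetaApp : LamBeta → LamBeta → Part LamBeta := fun a b =>
  Part.some (Quotient.map₂ Lam.app (fun _ _ h1 _ _ h2 => BetaEq.appCongr h1 h2) a b)

/-- Application in `λη` (total). -/
def lamBetaEtaApp : LamBetaEta → LamBetaEta → Part LamBetaEta := fun a b =>
  Part.some (Quotient.map₂ Lam.app (fun _ _ h1 _ _ h2 => BetaEtaEq.appCongr h1 h2) a b)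


/-! ### Auxiliary development -/

/-- Numbering of oracle codes (inverse of `OCode.ofNat`). -/
def OCode.toNat : OCode → ℕ
  | .zero => 0
  | .succ => 1
  | .left => 2
  | .right => 3
  | .oracle => 4
  | .pair a b => 4 * Nat.pair a.toNat b.toNat + 5
  | .comp a b => 4 * Nat.pair a.toNat b.toNat + 6
  | .prec a b => 4 * Nat.pair a.toNat b.toNat + 7
  | .rfind' a => 4 * Nat.pair a.toNat a.toNat + 8

lemma OCode.ofNat_toNat : ∀ c : OCode, OCode.ofNat c.toNat = c := by
  intro c
  induction c with
  | zero => rw [OCode.toNat, OCode.ofNat]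
  | succ => rw [OCode.toNat, OCode.ofNat]
  | left => rw [OCode.toNat, OCode.ofNat]
  | right => rw [OCode.toNat, OCode.ofNat]
  | oracle => rw [OCode.toNat, OCode.ofNat]
  | pair a b iha ihb =>
      show OCode.ofNat ((4 * Nat.pair a.toNat b.toNat) + 5) = _
      rw [OCode.ofNat]
      simp [Nat.mul_add_mod, Nat.mul_div_cancel_left, iha, ihb]
  | comp a b iha ihb =>
      show OCode.ofNat ((4 * Nat.pair a.toNat b.toNat + 1) + 5) = _
      rw [OCode.ofNat]
      simp [Nat.mul_add_mod, Nat.mul_add_div, iha, ihb]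
  | prec a b iha ihb =>
      show OCode.ofNat ((4 * Nat.pair a.toNat b.toNat + 2) + 5) = _
      rw [OCode.ofNat]
      simp [Nat.mul_add_mod, Nat.mul_add_div, iha, ihb]
  | rfind' a iha =>
      show OCode.ofNat ((4 * Nat.pair a.toNat a.toNat + 3) + 5) = _
      rw [OCode.ofNat]
      simp [Nat.mul_add_mod, Nat.mul_add_div, iha]

lemma OCode.ofNat_one : OCode.ofNat 1 = OCode.succ := by rw [OCode.ofNat]

/-- A code for the constant function with value `k`. -/
def constc : ℕ → OCode
  | 0 => .zero
  | k + 1 => .comp .succ (constc k)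

lemma evalo_constc (O : ℕ →. ℕ) (k n : ℕ) : evalo O (constc k) n = Part.some k := by
  induction k with
  | zero => rfl
  | succ k ih =>
    simp [constc, evalo, ih]
    exact Part.bind_some _ _

/-- A code deciding via the oracle: outputs `nb` if `O n = 0`, `nt` if `O n = 1`. -/
def branchc (nb nt : ℕ) : OCode :=
  .comp (.prec (constc nb) (constc nt)) (.pair .zero .oracle)

lemma evalo_branchc_pos (X : Set ℕ) (nb nt n : ℕ) (h : n ∈ X) :
    evalo (chi X) (branchc nb nt) n = Part.some nt := by
  have hchi : chi X n = Part.some 1 := by simp [chi, Set.indicator_of_mem h]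
  have hpure : (pure 0 : ℕ →. ℕ) n = Part.some 0 := rfl
  simp [branchc, evalo, Seq.seq, hchi, hpure, evalo_constc, Nat.unpaired, Nat.unpair_pair]

lemma evalo_branchc_neg (X : Set ℕ) (nb nt n : ℕ) (h : n ∉ X) :
    evalo (chi X) (branchc nb nt) n = Part.some nb := by
  have hchi : chi X n = Part.some 0 := by simp [chi, Set.indicator_of_notMem h]
  have hpure : (pure 0 : ℕ →. ℕ) n = Part.some 0 := rfl
  simp [branchc, evalo, Seq.seq, hchi, hpure, evalo_constc, Nat.unpaired, Nat.unpair_pair]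

lemma evalo_ofNat_one (O : ℕ →. ℕ) (m : ℕ) :
    evalo O (OCode.ofNat 1) m = Part.some (m + 1) := by
  rw [OCode.ofNat_one]
  simp [evalo]

theorem stmt1 (X Y : Set ℕ) (α : Type*) (app : α → α → Part α) (hpca : IsPCA app)
    (γ : ℕ →. α) (hγ : IsNumbering γ) (heff : EffValued Y app γ)
    (f : ℕ → α) (hf : IsPCAEmbedding (k1App X) app f)
    (abot atop : α) (hbot : abot ∈ Set.range f) (htop : atop ∈ Set.range f) :
    ∃ d : ℕ → ℕ, ComputableIn Y d ∧ IsDecider γ abot atop X d := by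
  classical
  obtain ⟨nb, rfl⟩ := hbot
  obtain ⟨nt, rfl⟩ := htop
  obtain ⟨ψ, ⟨cψ, hcψ⟩, hψ⟩ := heff
  obtain ⟨hfinj, hfapp⟩ := hf
  obtain ⟨c0, hc0⟩ := hγ (f 0)
  obtain ⟨cs, hcs⟩ := hγ (f 1)
  set e : ℕ := (branchc nb nt).toNat with he
  obtain ⟨ce, hce⟩ := hγ (f e)
  -- successor in K1^X
  have hsucc : ∀ m : ℕ, (m + 1) ∈ k1App X 1 m := by
    intro m
    simp [k1App, phi, evalo_ofNat_one]
  -- the branching code in K1^X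
  have hbr : ∀ n : ℕ, (if n ∈ X then nt else nb) ∈ k1App X e n := by
    intro n
    by_cases h : n ∈ X
    · simp only [if_pos h, k1App, phi, he, OCode.ofNat_toNat,
        evalo_branchc_pos X nb nt n h, Part.mem_some_iff]
    · simp only [if_neg h, k1App, phi, he, OCode.ofNat_toNat,
        evalo_branchc_neg X nb nt n h, Part.mem_some_iff]
  -- step code on codes of numerals
  set cg : OCode := .comp cψ (.pair (constc cs) (.comp .right .right)) with hcg
  have hcgval : ∀ a y i : ℕ,
      evalo (chi Y) cg (Nat.pair a (Nat.pair y i)) = ψ (Nat.pair cs i) := by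
    intro a y i
    simp [hcg, evalo, Seq.seq, evalo_constc, hcψ]
    change Part.bind (Part.map (Nat.pair cs) (Part.bind (Part.some (Nat.pair y i)) (fun n => Part.some (Nat.unpair n).2))) ψ = _
    simp
    exact Part.bind_some _ _
  set cC : OCode := .comp (.prec (constc c0) cg) (.pair .zero (.pair .left .right)) with hcC
  have hpair0 : ∀ n : ℕ,
      evalo (chi Y) (.pair .zero (.pair .left .right)) n = Part.some (Nat.pair 0 n) := by
    intro n
    have hpure : (pure 0 : ℕ →. ℕ) n = Part.some 0 := rfl
    simp [evalo, Seq.seq, hpure]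
  have hCrec : ∀ n : ℕ, evalo (chi Y) cC n =
      Nat.rec (motive := fun _ => Part ℕ) (evalo (chi Y) (constc c0) 0)
        (fun y IH => IH.bind fun i => evalo (chi Y) cg (Nat.pair 0 (Nat.pair y i))) n := by
    intro n
    rw [hcC]
    show (evalo (chi Y) (.pair .zero (.pair .left .right)) n).bind _ = _
    rw [hpair0]
    simp [evalo, Nat.unpaired, Nat.unpair_pair]
  -- invariant: the chain produces γ-codes of f m
  have hchain : ∀ m : ℕ, ∃ j : ℕ, j ∈ evalo (chi Y) cC m ∧ f m ∈ γ j := by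
    intro m
    induction m with
    | zero =>
        refine ⟨c0, ?_, hc0⟩
        rw [hCrec]
        simp [evalo_constc]
    | succ m ih =>
        obtain ⟨j, hjmem, hjγ⟩ := ih
        have happ : f (m + 1) ∈ app (f 1) (f m) := hfapp _ _ _ (hsucc m)
        obtain ⟨j', hj'mem, hj'γ⟩ := hψ cs j (f 1) (f m) (f (m + 1)) hcs hjγ happ
        refine ⟨j', ?_, hj'γ⟩
        rw [hCrec]
        rw [hCrec] at hjmem
        refine Part.mem_bind_iff.2 ⟨j, hjmem, ?_⟩
        rw [hcgval]
        exact hj'mem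
  -- the full decider as a partial function
  set cD : OCode := .comp cψ (.pair (constc ce) cC) with hcD
  have hDval : ∀ n : ℕ, evalo (chi Y) cD n =
      (evalo (chi Y) cC n).bind fun j => ψ (Nat.pair ce j) := by
    intro n
    have hpure : (pure 0 : ℕ →. ℕ) n = Part.some 0 := rfl
    simp [hcD, evalo, Seq.seq, evalo_constc, hcψ, hpure, Nat.unpaired,
      Nat.unpair_pair, Part.bind_map]
    exact Part.bind_map _ _ _
  have hDom : ∀ n : ℕ, ∃ j : ℕ, j ∈ evalo (chi Y) cD n ∧
      f (if n ∈ X then nt else nb) ∈ γ j := by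
    intro n
    obtain ⟨j, hjmem, hjγ⟩ := hchain n
    have happ : f (if n ∈ X then nt else nb) ∈ app (f e) (f n) := hfapp _ _ _ (hbr n)
    obtain ⟨j', hj'mem, hj'γ⟩ :=
      hψ ce j (f e) (f n) (f (if n ∈ X then nt else nb)) hce hjγ happ
    refine ⟨j', ?_, hj'γ⟩
    rw [hDval]
    exact Part.mem_bind_iff.2 ⟨j, hjmem, hj'mem⟩
  choose d hd1 hd2 using hDom
  refine ⟨d, ?_, ?_⟩
  · exact ⟨cD, funext fun n => Part.eq_some_iff.2 (hd1 n)⟩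
  · intro n
    have hγd := hd2 n
    constructor
    · intro hn
      rw [if_neg hn] at hγd
      exact Part.eq_some_iff.2 hγd
    · intro hn
      rw [if_pos hn] at hγd
      exact Part.eq_some_iff.2 hγd


end PCAEmb
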